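/- arXiv:1710.10770 — 8 statements merged into one kernel-verified Lean document; each statement's English description precedes it below -/
import Mathlib

section
/- Let M ≥ 0 and let (a_k)_{k≥0} be a sequence of nonnegative real numbers satisfying a_{k+1} ≤ (1 − s_k) a_k + (1/2) s_k² M for all k ≥ 0, where s_k = 2/(k+2). Then a_k ≤ 2M/(k+2) for all k ≥ 1. -/
/-! The bound `b k = 2M/(k+2)` is a supersolution of the recursion: one step of the recursion
maps `b k` to `2M(k+1)/(k+2)² ≤ 2M/(k+3) = b (k+1)`, because `(k+1)(k+3) ≤ (k+2)²`. Since the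
step is monotone in `a k` (its coefficient `1 - 2/(k+2)` is nonnegative), induction from
`a 1 ≤ M/2` propagates `a k ≤ b k`. -/

lemma one_sub_two_div_add_two_nonneg {t : ℝ} (ht : 0 ≤ t) : 0 ≤ 1 - 2 / (t + 2) := by
  rw [sub_nonneg, div_le_one (by linarith)]
  linarith

lemma stepsize_recursion_step_eq {t : ℝ} (ht : 0 < t + 2) (M : ℝ) :
    (1 - 2 / (t + 2)) * (2 * M / (t + 2)) + 1 / 2 * (2 / (t + 2)) ^ 2 * M
      = 2 * M * (t + 1) / (t + 2) ^ 2 := by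
  field_simp
  ring

lemma stepsize_recursion_step_le {t M : ℝ} (ht : 0 < t + 2) (hM : 0 ≤ M) :
    (1 - 2 / (t + 2)) * (2 * M / (t + 2)) + 1 / 2 * (2 / (t + 2)) ^ 2 * M
      ≤ 2 * M / (t + 1 + 2) := by
  rw [stepsize_recursion_step_eq ht, div_le_div_iff₀ (by positivity) (by linarith)]
  have hsq : (t + 1) * (t + 1 + 2) ≤ (t + 2) ^ 2 := by nlinarith
  nlinarith

theorem frankWolfe_stepsize_recursion_general (M : ℝ) (hM : 0 ≤ M) (a : ℕ → ℝ)
    (hrec : ∀ k : ℕ, a (k + 1) ≤ (1 - 2 / ((k : ℝ) + 2)) * a k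
      + (1 / 2) * (2 / ((k : ℝ) + 2)) ^ 2 * M) :
    ∀ k : ℕ, 1 ≤ k → a k ≤ 2 * M / ((k : ℝ) + 2) := by
  intro k hk
  induction k, hk using Nat.le_induction with
  | base =>
    have h := hrec 0
    norm_num at h ⊢
    linarith
  | succ n _ ih =>
    have hn : (0 : ℝ) ≤ n := n.cast_nonneg
    push_cast
    calc a (n + 1)
        ≤ (1 - 2 / ((n : ℝ) + 2)) * a n + 1 / 2 * (2 / ((n : ℝ) + 2)) ^ 2 * M := hrec n
      _ ≤ (1 - 2 / ((n : ℝ) + 2)) * (2 * M / ((n : ℝ) + 2))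
            + 1 / 2 * (2 / ((n : ℝ) + 2)) ^ 2 * M := by
          gcongr
          exact one_sub_two_div_add_two_nonneg hn
      _ ≤ 2 * M / ((n : ℝ) + 1 + 2) := stepsize_recursion_step_le (by linarith) hM

/-- Stepsize recursion lemma for Frank–Wolfe (Lemma 3.3): if `a` is a nonnegative
sequence with `a (k+1) ≤ (1 - s_k) * a k + (1/2) * s_k ^ 2 * M` for the stepsizes
`s_k = 2 / (k + 2)`, then `a k ≤ 2 * M / (k + 2)` for all `k ≥ 1`. -/
theorem frankWolfe_stepsize_recursion (M : ℝ) (hM : 0 ≤ M) (a : ℕ → ℝ)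
    (ha : ∀ k, 0 ≤ a k)
    (hrec : ∀ k : ℕ, a (k + 1) ≤ (1 - 2 / ((k : ℝ) + 2)) * a k
      + (1 / 2) * (2 / ((k : ℝ) + 2)) ^ 2 * M) :
    ∀ k : ℕ, 1 ≤ k → a k ≤ 2 * M / ((k : ℝ) + 2) :=
  frankWolfe_stepsize_recursion_general M hM a hrec
end

section
/- (Euclidean instantiation of the Frank-Wolfe sublinear rate, Theorem 3.4.) Let E be a real inner product space, X ⊆ E a convex set, φ : E → ℝ a function with gradient ∇φ, and M ≥ 0 a constant such that: (i) φ is convex on X in the first-order sense, i.e., φ(y) ≥ φ(x) + ⟪∇φ(x), y − x⟫ for all x, y ∈ X; (ii) the curvature bound holds: φ(x + s(z − x)) ≤ φ(x) + s⟪∇φ(x), z − x⟫ + (s²/2)M for all x, z ∈ X and s ∈ [0,1]. Let x* ∈ X satisfy φ(x*) ≤ φ(z) for all z ∈ X. Suppose X_0 ∈ X and for every k ≥ 0 there is Z_k ∈ X with ⟪∇φ(X_k), Z_k − X_k⟫ ≤ ⟪∇φ(X_k), z − X_k⟫ for all z ∈ X, and X_{k+1} = X_k + (2/(k+2))(Z_k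 − X_k). Then φ(X_k) − φ(x*) ≤ 2M/(k+2) for all k ≥ 1. -/
open Set

/-!
With `s_k = 2/(k+2)`, the curvature bound at `X_k` towards the linear minimizer `Z_k`, together
with `⟪∇φ(X_k), Z_k - X_k⟫ ≤ ⟪∇φ(X_k), x* - X_k⟫ ≤ φ(x*) - φ(X_k)`, gives for the gap
`h_k = φ(X_k) - φ(x*)` the recursion `h_{k+1} ≤ (1 - s_k) h_k + s_k² M / 2`. Since `s_0 = 1`, the
first step forgets `h_0` entirely, and from then on `h_k ≤ 2M/(k+2)` propagates because
`(k+1)(k+3) ≤ (k+2)²`.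
-/

section CurvatureBound

variable {E : Type*} [NormedAddCommGroup E] [InnerProductSpace ℝ E]

def HasCurvatureBound (X : Set E) (φ : E → ℝ) (g : E → E) (M : ℝ) : Prop :=
  ∀ x ∈ X, ∀ z ∈ X, ∀ s ∈ Icc (0 : ℝ) 1,
    φ (x + s • (z - x)) ≤ φ x + s * inner ℝ (g x) (z - x) + s ^ 2 / 2 * M

variable {X : Set E} {φ : E → ℝ} {g : E → E} {M : ℝ}

theorem HasCurvatureBound.nonneg (hcurv : HasCurvatureBound X φ g M) (hX : X.Nonempty) :
    0 ≤ M := by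
  obtain ⟨x, hx⟩ := hX
  have h := hcurv x hx x hx 1 ⟨zero_le_one, le_rfl⟩
  simp only [sub_self, smul_zero, add_zero, inner_zero_right, mul_zero] at h
  linarith

theorem HasCurvatureBound.gap_frankWolfe_step_le
    (hconv : ∀ x ∈ X, ∀ y ∈ X, φ x + inner ℝ (g x) (y - x) ≤ φ y)
    (hcurv : HasCurvatureBound X φ g M) {x z y : E} (hx : x ∈ X) (hz : z ∈ X) (hy : y ∈ X)
    (hzopt : ∀ w ∈ X, inner ℝ (g x) (z - x) ≤ inner ℝ (g x) (w - x))
    {s : ℝ} (hs : s ∈ Icc (0 : ℝ) 1) :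
    φ (x + s • (z - x)) - φ y ≤ (1 - s) * (φ x - φ y) + s ^ 2 / 2 * M := by
  have hdescent : inner ℝ (g x) (z - x) ≤ φ y - φ x := by
    linarith [hzopt y hy, hconv x hx y hy]
  have := mul_le_mul_of_nonneg_left hdescent hs.1
  linarith [hcurv x hx z hz s hs]

end CurvatureBound

theorem two_div_natCast_add_two_mem_Icc (k : ℕ) : 2 / ((k : ℝ) + 2) ∈ Icc (0 : ℝ) 1 :=
  ⟨by positivity, (div_le_one (by positivity)).2 (by linarith [k.cast_nonneg (α := ℝ)])⟩

theorem Convex.add_smul_sub_mem_of_update {E : Type*} [AddCommGroup E] [Module ℝ E] {X : Set E}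
    (hX : Convex ℝ X) {x z : ℕ → E} {s : ℕ → ℝ} (hs : ∀ k, s k ∈ Icc (0 : ℝ) 1)
    (hx0 : x 0 ∈ X) (hz : ∀ k, z k ∈ X)
    (hupd : ∀ k, x (k + 1) = x k + s k • (z k - x k)) :
    ∀ k, x k ∈ X
  | 0 => hx0
  | k + 1 => hupd k ▸
      hX.add_smul_sub_mem (hX.add_smul_sub_mem_of_update hs hx0 hz hupd k) (hz k) (hs k)

theorem le_two_mul_div_of_frankWolfe_recursion {h : ℕ → ℝ} {M : ℝ} (hM : 0 ≤ M)
    (hrec : ∀ k : ℕ,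
      h (k + 1) ≤ (1 - 2 / ((k : ℝ) + 2)) * h k + (2 / ((k : ℝ) + 2)) ^ 2 / 2 * M) :
    ∀ k : ℕ, 1 ≤ k → h k ≤ 2 * M / ((k : ℝ) + 2) := by
  refine Nat.le_induction ?_ fun k _ ih => ?_
  · have h1 := hrec 0
    norm_num at h1 ⊢
    linarith
  · have hk2 : (0 : ℝ) < k + 2 := by positivity
    have hcoef : 0 ≤ 1 - 2 / ((k : ℝ) + 2) := sub_nonneg.2 (two_div_natCast_add_two_mem_Icc k).2
    calc h (k + 1)
        ≤ (1 - 2 / ((k : ℝ) + 2)) * (2 * M / ((k : ℝ) + 2)) + (2 / ((k : ℝ) + 2)) ^ 2 / 2 * M :=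
          (hrec k).trans (by gcongr)
      _ = 2 * M * (k + 1) / ((k : ℝ) + 2) ^ 2 := by field_simp; ring
      _ ≤ 2 * M / ((↑(k + 1) : ℝ) + 2) := by
          rw [div_le_div_iff₀ (by positivity) (by positivity)]
          push_cast
          nlinarith

theorem frankWolfe_sublinear_rate_general
    {E : Type*} [NormedAddCommGroup E] [InnerProductSpace ℝ E]
    (X : Set E) (hX : Convex ℝ X)
    (φ : E → ℝ) (g : E → E) (M : ℝ)
    (hconv : ∀ x ∈ X, ∀ y ∈ X, φ x + inner ℝ (g x) (y - x) ≤ φ y)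
    (hcurv : ∀ x ∈ X, ∀ z ∈ X, ∀ s ∈ Icc (0 : ℝ) 1,
      φ (x + s • (z - x)) ≤ φ x + s * inner ℝ (g x) (z - x) + s ^ 2 / 2 * M)
    (xstar : E) (hxstar : xstar ∈ X)
    (Xseq Zseq : ℕ → E) (hX0 : Xseq 0 ∈ X)
    (hZmem : ∀ k, Zseq k ∈ X)
    (hZopt : ∀ k, ∀ z ∈ X,
      (inner ℝ (g (Xseq k)) (Zseq k - Xseq k) : ℝ) ≤ inner ℝ (g (Xseq k)) (z - Xseq k))
    (hupd : ∀ k : ℕ, Xseq (k + 1) = Xseq k + (2 / ((k : ℝ) + 2)) • (Zseq k - Xseq k)) :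
    ∀ k : ℕ, 1 ≤ k → φ (Xseq k) - φ xstar ≤ 2 * M / ((k : ℝ) + 2) := by
  have hcurv' : HasCurvatureBound X φ g M := hcurv
  have hmem := hX.add_smul_sub_mem_of_update two_div_natCast_add_two_mem_Icc hX0 hZmem hupd
  refine le_two_mul_div_of_frankWolfe_recursion (hcurv'.nonneg ⟨xstar, hxstar⟩) fun k => ?_
  rw [hupd k]
  exact hcurv'.gap_frankWolfe_step_le hconv (hmem k) (hZmem k) hxstar (hZopt k)
    (two_div_natCast_add_two_mem_Icc k)

/-- Euclidean instantiation of the Frank–Wolfe sublinear rate (Theorem 3.4):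
under convexity and the curvature bound with constant `M`, the Frank–Wolfe
iterates with stepsize `2/(k+2)` satisfy `φ(X_k) - φ(x*) ≤ 2M/(k+2)`. -/
theorem frankWolfe_sublinear_rate
    {E : Type*} [NormedAddCommGroup E] [InnerProductSpace ℝ E]
    (X : Set E) (hX : Convex ℝ X)
    (φ : E → ℝ) (g : E → E) (M : ℝ) (hM : 0 ≤ M)
    (hconv : ∀ x ∈ X, ∀ y ∈ X, φ x + inner ℝ (g x) (y - x) ≤ φ y)
    (hcurv : ∀ x ∈ X, ∀ z ∈ X, ∀ s ∈ Icc (0 : ℝ) 1,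
      φ (x + s • (z - x)) ≤ φ x + s * inner ℝ (g x) (z - x) + s ^ 2 / 2 * M)
    (xstar : E) (hxstar : xstar ∈ X) (hmin : ∀ z ∈ X, φ xstar ≤ φ z)
    (Xseq Zseq : ℕ → E) (hX0 : Xseq 0 ∈ X)
    (hZmem : ∀ k, Zseq k ∈ X)
    (hZopt : ∀ k, ∀ z ∈ X,
      (inner ℝ (g (Xseq k)) (Zseq k - Xseq k) : ℝ) ≤ inner ℝ (g (Xseq k)) (z - Xseq k))
    (hupd : ∀ k : ℕ, Xseq (k + 1) = Xseq k + (2 / ((k : ℝ) + 2)) • (Zseq k - Xseq k)) :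
    ∀ k : ℕ, 1 ≤ k → φ (Xseq k) - φ xstar ≤ 2 * M / ((k : ℝ) + 2) :=
  frankWolfe_sublinear_rate_general X hX φ g M hconv hcurv xstar hxstar Xseq Zseq hX0 hZmem hZopt
    hupd
end

section
/- (Euclidean instantiation of the Frank-Wolfe linear rate, Theorem 3.5.) Let E be a real inner product space, X ⊆ E a convex set, φ : E → ℝ a function with gradient ∇φ, M > 0 and μ > 0 constants such that: (i) φ is μ-strongly convex on X, i.e., φ(y) ≥ φ(x) + ⟪∇φ(x), y − x⟫ + (μ/2)‖y − x‖² for all x, y ∈ X; (ii) the curvature bound holds: φ(x + s(z − x)) ≤ φ(x) + s⟪∇φ(x), z − x⟫ + (s²/2)M for all x, z ∈ X and s ∈ [0,1]. Let x* ∈ X be the minimizer of φ over X and suppose r > 0 is such that the closed ball of radius r centered at x* is contained in X. Suppose X_0 ∈ X and for every k ≥ 0: Z_k ∈ X satisfies ⟪∇φ(X_k), Z_k − X_k⟫ ≤ ⟪∇φ(X_k), z − X_k⟫ for all z ∈ X; writing Δ_k := φ(X_k) − φ(x*), the stepsize s_k := r√(μ Δ_k)/(√2 M) satisfies s_k ≤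 1; and X_{k+1} = X_k + s_k(Z_k − X_k). Then for every k ≥ 0, Δ_{k+1} ≤ (1 − r²μ/(4M)) Δ_k. -/
/-!
Strong convexity at `x*` gives the Polyak–Łojasiewicz bound `2 μ Δ ≤ ‖∇φ(x)‖²`. Since the ball
of radius `r` around `x*` lies in `X`, the linear minimization step does at least as well as the
point `x* - r ∇φ(x) / ‖∇φ(x)‖`, so the Frank–Wolfe gap satisfies
`⟪∇φ(x), z - x⟫ ≤ -Δ - r ‖∇φ(x)‖ ≤ -Δ - r √(2 μ Δ)`. Inserting this into the curvature bound with
the given stepsize leaves a decrease of at least `r² μ Δ / M - r² μ Δ / (4 M)`.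
-/

open Set

section InnerProductSpace

variable {E : Type*} [NormedAddCommGroup E] [InnerProductSpace ℝ E]

theorem two_mul_mul_sub_le_norm_sq_of_le {φ : E → ℝ} {x y v : E} {μ : ℝ} (hμ : 0 ≤ μ)
    (h : φ x + inner ℝ v (y - x) + μ / 2 * ‖y - x‖ ^ 2 ≤ φ y) :
    2 * μ * (φ x - φ y) ≤ ‖v‖ ^ 2 := by
  have hCS : -(‖v‖ * ‖y - x‖) ≤ inner ℝ v (y - x) :=
    neg_le_of_abs_le (abs_real_inner_le_norm v (y - x))
  have hlin : φ x - φ y ≤ ‖v‖ * ‖y - x‖ - μ / 2 * ‖y - x‖ ^ 2 := by linarith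
  nlinarith [sq_nonneg (μ * ‖y - x‖ - ‖v‖), mul_le_mul_of_nonneg_left hlin hμ]

theorem inner_sub_le_inner_sub_sub_mul_norm_of_closedBall_subset {X : Set E} {c x z v : E}
    {r : ℝ} (hr : 0 ≤ r) (hball : Metric.closedBall c r ⊆ X)
    (hz : ∀ w ∈ X, inner ℝ v (z - x) ≤ inner ℝ v (w - x)) :
    inner ℝ v (z - x) ≤ inner ℝ v (c - x) - r * ‖v‖ := by
  rcases eq_or_ne v 0 with rfl | hv
  · simp
  have hv : ‖v‖ ≠ 0 := norm_ne_zero_iff.2 hv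
  have hw : c - (r / ‖v‖) • v ∈ X := by
    refine hball ?_
    rw [Metric.mem_closedBall, dist_eq_norm, sub_sub_cancel_left, norm_neg, norm_smul,
      Real.norm_eq_abs, abs_div, abs_norm, abs_of_nonneg hr, div_mul_cancel₀ _ hv]
  calc inner ℝ v (z - x) ≤ inner ℝ v (c - (r / ‖v‖) • v - x) := hz _ hw
    _ = inner ℝ v (c - x) - r * ‖v‖ := by
      rw [sub_right_comm, inner_sub_right, inner_smul_right, real_inner_self_eq_norm_sq]
      field_simp

end InnerProductSpace

theorem sub_le_one_sub_mul_of_curvature_step {Δ Δ' G d μ M r : ℝ} (hM : 0 < M) (hμ : 0 ≤ μ)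
    (hr : 0 ≤ r) (hΔ : 0 ≤ Δ) (hG0 : 0 ≤ G) (hG : 2 * μ * Δ ≤ G ^ 2) (hgap : d ≤ -Δ - r * G)
    (hcurv : Δ' ≤ Δ + r * Real.sqrt (μ * Δ) / (Real.sqrt 2 * M) * d
      + (r * Real.sqrt (μ * Δ) / (Real.sqrt 2 * M)) ^ 2 / 2 * M) :
    Δ' ≤ (1 - r ^ 2 * μ / (4 * M)) * Δ := by
  set a := Real.sqrt (μ * Δ)
  set b := Real.sqrt 2
  set s := r * a / (b * M)
  have ha : a ^ 2 = μ * Δ := Real.sq_sqrt (by positivity)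
  have hb : b ^ 2 = 2 := Real.sq_sqrt (by norm_num)
  have hb0 : 0 < b := Real.sqrt_pos.2 two_pos
  have hs : 0 ≤ s := by positivity
  have hGab : b * a ≤ G := by
    refine abs_le_of_sq_le_sq' ?_ hG0 |>.2
    rw [mul_pow, hb, ha]
    linarith
  have hdescent : 4 * (r ^ 2 * (μ * Δ) / (4 * M)) ≤ s * (r * G) :=
    calc 4 * (r ^ 2 * (μ * Δ) / (4 * M)) = r ^ 2 * a ^ 2 / M := by rw [ha]; field_simp
      _ = s * (r * (b * a)) := by simp only [s]; field_simp
      _ ≤ s * (r * G) := by gcongr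
  have hquad : s ^ 2 / 2 * M = r ^ 2 * (μ * Δ) / (4 * M) := by
    rw [div_pow, mul_pow, mul_pow, ha, hb]
    field_simp
    ring
  have hsd : s * d ≤ -(s * (r * G)) :=
    calc s * d ≤ s * (-Δ - r * G) := by gcongr
      _ ≤ -(s * (r * G)) := by linarith [mul_nonneg hs hΔ]
  calc Δ' ≤ Δ + s * d + s ^ 2 / 2 * M := hcurv
    _ ≤ Δ - 4 * (r ^ 2 * (μ * Δ) / (4 * M)) + r ^ 2 * (μ * Δ) / (4 * M) := by
      rw [hquad]; linarith
    _ ≤ (1 - r ^ 2 * μ / (4 * M)) * Δ := by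
      have hq : 0 ≤ r ^ 2 * (μ * Δ) / (4 * M) := by positivity
      linarith [show (1 - r ^ 2 * μ / (4 * M)) * Δ = Δ - r ^ 2 * (μ * Δ) / (4 * M) by ring]

theorem frankWolfe_iterate_mem {E : Type*} [AddCommGroup E] [Module ℝ E] {X : Set E}
    (hX : Convex ℝ X) {x z : ℕ → E} {s : ℕ → ℝ} (h0 : x 0 ∈ X) (hz : ∀ k, z k ∈ X)
    (hs : ∀ k, s k ∈ Icc 0 1) (hupd : ∀ k, x (k + 1) = x k + s k • (z k - x k)) :
    ∀ k, x k ∈ X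
  | 0 => h0
  | k + 1 => hupd k ▸ hX.add_smul_sub_mem (frankWolfe_iterate_mem hX h0 hz hs hupd k) (hz k) (hs k)

/-- Euclidean instantiation of the Frank–Wolfe linear rate (Theorem 3.5):
if `φ` is `μ`-strongly convex on `X`, satisfies the curvature bound with constant
`M`, the minimizer `x*` has a closed ball of radius `r` around it contained in `X`,
and the Frank–Wolfe iterates use the stepsize `s_k = r √(μ Δ_k) / (√2 M)` (assumed
to be `≤ 1`), then the suboptimality gap `Δ_k = φ(X_k) - φ(x*)` contracts:
`Δ_{k+1} ≤ (1 - r² μ / (4 M)) Δ_k`. -/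
theorem frankWolfe_linear_rate
    {E : Type*} [NormedAddCommGroup E] [InnerProductSpace ℝ E]
    (X : Set E) (hX : Convex ℝ X)
    (φ : E → ℝ) (g : E → E) (M μ : ℝ) (hM : 0 < M) (hμ : 0 < μ)
    (hsconv : ∀ x ∈ X, ∀ y ∈ X,
      φ x + inner ℝ (g x) (y - x) + μ / 2 * ‖y - x‖ ^ 2 ≤ φ y)
    (hcurv : ∀ x ∈ X, ∀ z ∈ X, ∀ s ∈ Icc (0 : ℝ) 1,
      φ (x + s • (z - x)) ≤ φ x + s * inner ℝ (g x) (z - x) + s ^ 2 / 2 * M)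
    (xstar : E) (hxstar : xstar ∈ X) (hmin : ∀ z ∈ X, φ xstar ≤ φ z)
    (r : ℝ) (hr : 0 < r) (hball : Metric.closedBall xstar r ⊆ X)
    (Xseq Zseq : ℕ → E) (hX0 : Xseq 0 ∈ X)
    (hZmem : ∀ k, Zseq k ∈ X)
    (hZopt : ∀ k, ∀ z ∈ X,
      (inner ℝ (g (Xseq k)) (Zseq k - Xseq k) : ℝ) ≤ inner ℝ (g (Xseq k)) (z - Xseq k))
    (hstep : ∀ k : ℕ,
      r * Real.sqrt (μ * (φ (Xseq k) - φ xstar)) / (Real.sqrt 2 * M) ≤ 1)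
    (hupd : ∀ k : ℕ, Xseq (k + 1) = Xseq k
      + (r * Real.sqrt (μ * (φ (Xseq k) - φ xstar)) / (Real.sqrt 2 * M)) •
        (Zseq k - Xseq k)) :
    ∀ k : ℕ, φ (Xseq (k + 1)) - φ xstar ≤
      (1 - r ^ 2 * μ / (4 * M)) * (φ (Xseq k) - φ xstar) := by
  have hr0 : 0 ≤ r := hr.le
  have hmem := frankWolfe_iterate_mem hX hX0 hZmem
    (fun k => ⟨by positivity, hstep k⟩) hupd
  intro k
  have hPL := two_mul_mul_sub_le_norm_sq_of_le hμ.le (hsconv _ (hmem k) _ hxstar)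
  have hgap : inner ℝ (g (Xseq k)) (Zseq k - Xseq k)
      ≤ -(φ (Xseq k) - φ xstar) - r * ‖g (Xseq k)‖ := by
    have hball_step :=
      inner_sub_le_inner_sub_sub_mul_norm_of_closedBall_subset hr0 hball (hZopt k)
    have hconv := hsconv _ (hmem k) _ hxstar
    have hquad : 0 ≤ μ / 2 * ‖xstar - Xseq k‖ ^ 2 := by positivity
    linarith
  refine sub_le_one_sub_mul_of_curvature_step hM hμ.le hr0 (sub_nonneg.2 (hmin _ (hmem k)))
    (norm_nonneg _) hPL hgap ?_
  rw [hupd k]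
  linarith [hcurv _ (hmem k) _ (hZmem k) _ ⟨by positivity, hstep k⟩]
end

section
/- (Theorem 4.4, convergence of the Frank-Wolfe gap for nonconvex Euclidean Frank-Wolfe.) Let E be a real inner product space, X ⊆ E a convex set, φ : E → ℝ a function with gradient ∇φ, and M > 0 a constant such that the curvature bound holds: φ(x + s(z − x)) ≤ φ(x) + s⟪∇φ(x), z − x⟫ + (s²/2)M for all x, z ∈ X and s ∈ [0,1]. Suppose X_0 ∈ X and for every k ≥ 0: Z_k ∈ X satisfies ⟪−∇φ(X_k), Z_k − X_k⟫ ≥ ⟪−∇φ(X_k), z − X_k⟫ for all z ∈ X; the Frank-Wolfe gap is G_k := ⟪−∇φ(X_k), Z_k − X_k⟫; the stepsize is s_k := min{G_k/M, 1}; and X_{k+1} = X_k + s_k(Z_k − X_k). Let h₀ := φ(X_0) − inf_{z ∈ X} φ(z) and assume this infimum is finite. Then for every K ≥ 0, min_{0 ≤ k ≤ K} G_k ≤ max{2h₀, M}/√(K+1). -/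
open Set

/-!
With the short step `s = min (G / M) 1`, the curvature bound shows that each Frank–Wolfe step
decreases `φ` by at least `min (G² / M, G) / 2`. Summing over `K + 1` steps, the total decrease
is at most `h₀`, so the smallest gap `G_min` satisfies
`(K + 1) · min (G_min² / M, G_min) ≤ 2 h₀`; solving this for `G_min` in the two regimes
`G_min ≤ M` and `G_min > M` gives the rate.
-/

namespace FrankWolfe

noncomputable def stepSize (M G : ℝ) : ℝ := min (G / M) 1

noncomputable def progress (M G : ℝ) : ℝ := min (G ^ 2 / M) G / 2

variable {M G : ℝ}

lemma stepSize_mem_Icc (hM : 0 ≤ M) (hG : 0 ≤ G) : stepSize M G ∈ Icc (0 : ℝ) 1 :=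
  ⟨le_min (div_nonneg hG hM) zero_le_one, min_le_right _ _⟩

lemma progress_le_stepSize (hM : 0 < M) :
    progress M G ≤ stepSize M G * G - stepSize M G ^ 2 / 2 * M := by
  unfold progress stepSize
  rcases le_or_gt G M with hGM | hMG
  · rw [min_eq_left ((div_le_one hM).mpr hGM)]
    have : G / M * G - (G / M) ^ 2 / 2 * M = G ^ 2 / M / 2 := by field_simp; ring
    rw [this]
    gcongr
    exact min_le_left _ _
  · rw [min_eq_right ((one_le_div hM).mpr hMG.le)]
    have := min_le_right (G ^ 2 / M) G
    linarith

lemma progress_monotoneOn (hM : 0 ≤ M) : MonotoneOn (progress M) (Ici 0) := by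
  intro a ha b _ hab
  unfold progress
  gcongr

lemma mul_sqrt_le_of_mul_progress_le {t n h : ℝ} (hM : 0 < M) (ht : 0 ≤ t) (hn : 1 ≤ n)
    (hprog : n * progress M t ≤ h) : t * √n ≤ max (2 * h) M := by
  unfold progress at hprog
  have hsqrt : √n ^ 2 = n := Real.sq_sqrt (by linarith)
  rcases le_or_gt t M with htM | hMt
  · rw [min_eq_left ((div_le_iff₀ hM).mpr (by nlinarith))] at hprog
    have hsq : n * t ^ 2 ≤ 2 * h * M := by
      have := mul_le_mul_of_nonneg_right hprog (by linarith : 0 ≤ 2 * M)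
      field_simp at this
      linarith
    have hmax : 2 * h * M ≤ max (2 * h) M ^ 2 := by
      nlinarith [le_max_left (2 * h) M, le_max_right (2 * h) M]
    refine (pow_le_pow_iff_left₀ (by positivity) (hM.le.trans (le_max_right _ _))
      two_ne_zero).mp ?_
    rw [mul_pow, hsqrt]
    linarith
  · rw [min_eq_right ((le_div_iff₀ hM).mpr (by nlinarith))] at hprog
    have hsqrt_le : √n ≤ n := by nlinarith [Real.sqrt_nonneg n]
    nlinarith [le_max_left (2 * h) M, mul_le_mul_of_nonneg_left hsqrt_le ht]

lemma progress_le_sub_step {E : Type*} [NormedAddCommGroup E] [InnerProductSpace ℝ E]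
    {φ : E → ℝ} {v x z : E} (hM : 0 < M)
    (hcurv : ∀ s ∈ Icc (0 : ℝ) 1,
      φ (x + s • (z - x)) ≤ φ x + s * inner ℝ v (z - x) + s ^ 2 / 2 * M)
    (hG : G = inner ℝ (-v) (z - x)) (hG0 : 0 ≤ G) :
    progress M G ≤ φ x - φ (x + stepSize M G • (z - x)) := by
  have hstep := hcurv _ (stepSize_mem_Icc hM.le hG0)
  rw [← neg_neg (inner ℝ v (z - x)), ← inner_neg_left, ← hG] at hstep
  linarith [progress_le_stepSize (G := G) hM]

end FrankWolfe

open FrankWolfe in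
/-- Theorem 4.4: convergence of the Frank–Wolfe gap for nonconvex Euclidean
Frank–Wolfe.  With curvature constant `M`, gap `G_k = ⟪-∇φ(X_k), Z_k - X_k⟫`,
stepsize `s_k = min {G_k / M, 1}`, and `h₀ = φ(X_0) - inf_{z ∈ X} φ(z)`, the
minimum gap after `K+1` iterations satisfies
`min_{0 ≤ k ≤ K} G_k ≤ max {2 h₀, M} / √(K+1)`. -/
theorem frankWolfe_nonconvex_gap_rate
    {E : Type*} [NormedAddCommGroup E] [InnerProductSpace ℝ E]
    (X : Set E) (hX : Convex ℝ X)
    (φ : E → ℝ) (g : E → E) (M : ℝ) (hM : 0 < M)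
    (hcurv : ∀ x ∈ X, ∀ z ∈ X, ∀ s ∈ Icc (0 : ℝ) 1,
      φ (x + s • (z - x)) ≤ φ x + s * inner ℝ (g x) (z - x) + s ^ 2 / 2 * M)
    (Xseq Zseq : ℕ → E) (hX0 : Xseq 0 ∈ X)
    (hZmem : ∀ k, Zseq k ∈ X)
    (hZopt : ∀ k, ∀ z ∈ X,
      (inner ℝ (-g (Xseq k)) (z - Xseq k) : ℝ) ≤ inner ℝ (-g (Xseq k)) (Zseq k - Xseq k))
    (G : ℕ → ℝ) (hG : ∀ k, G k = inner ℝ (-g (Xseq k)) (Zseq k - Xseq k))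
    (hupd : ∀ k : ℕ, Xseq (k + 1) = Xseq k + (min (G k / M) 1) • (Zseq k - Xseq k))
    (hbdd : BddBelow (φ '' X)) (h₀ : ℝ) (hh₀ : h₀ = φ (Xseq 0) - sInf (φ '' X)) :
    ∀ K : ℕ, (Finset.range (K + 1)).inf'
        (Finset.nonempty_range_iff.mpr (Nat.succ_ne_zero K)) G ≤
      max (2 * h₀) M / Real.sqrt ((K : ℝ) + 1) := by
  have hgap_nonneg : ∀ k, Xseq k ∈ X → 0 ≤ G k := fun k hk ↦ by
    simpa [hG k] using hZopt k _ hk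
  have hmem : ∀ k, Xseq k ∈ X := fun k ↦ by
    induction k with
    | zero => exact hX0
    | succ k ih =>
      rw [hupd k]
      exact hX.add_smul_sub_mem ih (hZmem k) (stepSize_mem_Icc hM.le (hgap_nonneg k ih))
  have hdesc : ∀ k, progress M (G k) ≤ φ (Xseq k) - φ (Xseq (k + 1)) := fun k ↦ by
    rw [hupd k]
    exact progress_le_sub_step hM (hcurv _ (hmem k) _ (hZmem k)) (hG k) (hgap_nonneg k (hmem k))
  intro K
  set Gmin := (Finset.range (K + 1)).inf'
    (Finset.nonempty_range_iff.mpr (Nat.succ_ne_zero K)) G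
  have hGmin : 0 ≤ Gmin := (Finset.le_inf'_iff _ _).mpr fun k _ ↦ hgap_nonneg k (hmem k)
  have htotal : ((K : ℝ) + 1) * progress M Gmin ≤ h₀ := by
    have hinf := csInf_le hbdd (mem_image_of_mem φ (hmem (K + 1)))
    calc ((K : ℝ) + 1) * progress M Gmin
        = (Finset.range (K + 1)).card • progress M Gmin := by simp
      _ ≤ ∑ k ∈ Finset.range (K + 1), progress M (G k) :=
        Finset.card_nsmul_le_sum _ _ _ fun k hk ↦ progress_monotoneOn hM.le hGmin
          (hgap_nonneg k (hmem k)) (Finset.inf'_le G hk)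
      _ ≤ ∑ k ∈ Finset.range (K + 1), (φ (Xseq k) - φ (Xseq (k + 1))) :=
        Finset.sum_le_sum fun k _ ↦ hdesc k
      _ ≤ h₀ := by rw [Finset.sum_range_sub', hh₀]; linarith
  rw [le_div_iff₀ (by positivity)]
  exact mul_sqrt_le_of_mul_progress_le hM hGmin (by simp) htotal
end

section
/- (Refined two-case gap bound from the proof of Theorem 4.4.) In the setting of nonconvex Euclidean Frank-Wolfe — E a real inner product space, X ⊆ E convex, φ : E → ℝ with gradient ∇φ satisfying the curvature bound φ(x + s(z − x)) ≤ φ(x) + s⟪∇φ(x), z − x⟫ + (s²/2)M for all x, z ∈ X, s ∈ [0,1] with M > 0; X_0 ∈ X; Z_k ∈ X maximizing ⟪−∇φ(X_k), z − X_k⟫ over z ∈ X; G_k := ⟪−∇φ(X_k), Z_k − X_k⟫; s_k := min{G_k/M, 1}; X_{k+1} = X_k + s_k(Z_k − X_k); h₀ := φ(X_0) − inf_{z∈X} φ(z) finite — the following hold for every K ≥ 0, writing G̃_K := min_{0 ≤ k ≤ K} G_k: if h₀ > M/2 then G̃_K ≤ 2h₀/√(K+1), and if h₀ ≤ M/2 then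 G̃_K ≤ √(2 h₀ M/(K+1)). -/
/-!
Each Frank–Wolfe step with the short step `s_k = min (G_k / M) 1` decreases `φ` by at least
`G_k · min(G_k, M) / (2M)`, by the curvature bound. Telescoping, the `K + 1` decreases sum to at
most `h₀`, so `(K + 1) · G̃ · min(G̃, M) ≤ 2 h₀ M`. If `G̃ ≤ M` this bounds `G̃²`, otherwise it
bounds `G̃`; when `h₀ ≤ M/2` the second alternative is impossible.
-/

open Set

lemma inner_sub_nonneg_of_forall_le {E : Type*} [NormedAddCommGroup E] [InnerProductSpace ℝ E]
    {X : Set E} {v x y : E} (hx : x ∈ X)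
    (hopt : ∀ z ∈ X, (inner ℝ v (z - x) : ℝ) ≤ inner ℝ v (y - x)) :
    0 ≤ (inner ℝ v (y - x) : ℝ) := by
  simpa using hopt x hx

lemma le_min_div_one_mul_sub_sq {M : ℝ} (hM : 0 < M) (G : ℝ) :
    G * min G M / (2 * M) ≤ min (G / M) 1 * G - min (G / M) 1 ^ 2 / 2 * M := by
  rcases le_or_gt G M with hGM | hMG
  · rw [min_eq_left ((div_le_one hM).2 hGM), min_eq_left hGM]
    apply le_of_eq
    field_simp
    ring
  · rw [min_eq_right ((one_le_div hM).2 hMG.le), min_eq_right hMG.le]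
    field_simp
    linarith

lemma mul_min_le_mul_min {a b M : ℝ} (ha : 0 ≤ a) (hM : 0 ≤ M) (hab : a ≤ b) :
    a * min a M ≤ b * min b M :=
  mul_le_mul hab (min_le_min_right M hab) (le_min ha hM) (ha.trans hab)

lemma sum_range_le_sub_of_succ_le_sub {a d : ℕ → ℝ} (h : ∀ k, a (k + 1) ≤ a k - d k) (n : ℕ) :
    ∑ k ∈ Finset.range n, d k ≤ a 0 - a n := by
  rw [← Finset.sum_range_sub']
  exact Finset.sum_le_sum fun k _ => by linarith [h k]

section TwoCases

variable {t M h N : ℝ}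

lemma le_two_mul_div_sqrt_of_mul_mul_min_le (hM : 0 < M) (hN : 1 ≤ N) (hh : M / 2 < h)
    (hkey : N * (t * min t M) ≤ 2 * h * M) :
    t ≤ 2 * h / Real.sqrt N := by
  have hN0 : 0 < N := by linarith
  rcases le_or_gt t M with htM | hMt
  · rw [min_eq_left htM] at hkey
    have hsq : t ^ 2 ≤ (2 * h) ^ 2 / N := by
      rw [le_div_iff₀ hN0]
      nlinarith
    calc t ≤ Real.sqrt ((2 * h) ^ 2 / N) := Real.le_sqrt_of_sq_le hsq
      _ = 2 * h / Real.sqrt N := by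
        rw [Real.sqrt_div (sq_nonneg _), Real.sqrt_sq (by linarith)]
  · rw [min_eq_right hMt.le] at hkey
    have ht : t ≤ 2 * h / N := by
      rw [le_div_iff₀ hN0]
      nlinarith
    exact ht.trans (div_le_div_of_nonneg_left (by linarith) (Real.sqrt_pos.2 hN0)
      (Real.sqrt_le_self_iff.2 (Or.inr hN)))

lemma le_sqrt_of_mul_mul_min_le (hM : 0 < M) (hN : 1 ≤ N) (hh : h ≤ M / 2)
    (hkey : N * (t * min t M) ≤ 2 * h * M) :
    t ≤ Real.sqrt (2 * h * M / N) := by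
  have htM : t ≤ M := by
    by_contra! hMt
    rw [min_eq_right hMt.le] at hkey
    have hNt : N * t ≤ 2 * h := le_of_mul_le_mul_right (by linarith) hM
    nlinarith
  rw [min_eq_left htM] at hkey
  apply Real.le_sqrt_of_sq_le
  rw [le_div_iff₀ (by linarith)]
  nlinarith

end TwoCases

section FrankWolfe

variable {E : Type*} [NormedAddCommGroup E] [InnerProductSpace ℝ E] {X : Set E} {φ : E → ℝ}
  {g : E → E} {M : ℝ}

lemma frankWolfe_step_le (hM : 0 < M)
    (hcurv : ∀ x ∈ X, ∀ z ∈ X, ∀ s ∈ Icc (0 : ℝ) 1,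
      φ (x + s • (z - x)) ≤ φ x + s * inner ℝ (g x) (z - x) + s ^ 2 / 2 * M)
    {x z : E} (hx : x ∈ X) (hz : z ∈ X) {G : ℝ} (hG : G = inner ℝ (-g x) (z - x)) (hG0 : 0 ≤ G) :
    φ (x + min (G / M) 1 • (z - x)) ≤ φ x - G * min G M / (2 * M) := by
  have hs : min (G / M) 1 ∈ Icc (0 : ℝ) 1 :=
    ⟨le_min (div_nonneg hG0 hM.le) zero_le_one, min_le_right _ _⟩
  have hc := hcurv x hx z hz _ hs
  rw [show (inner ℝ (g x) (z - x) : ℝ) = -G by rw [hG, inner_neg_left, neg_neg]] at hc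
  linarith [le_min_div_one_mul_sub_sq hM G]

lemma frankWolfe_iterate_mem_s4 (hX : Convex ℝ X) (hM : 0 < M) {Xseq Zseq : ℕ → E} {G : ℕ → ℝ}
    (hX0 : Xseq 0 ∈ X) (hZmem : ∀ k, Zseq k ∈ X)
    (hZopt : ∀ k, ∀ z ∈ X,
      (inner ℝ (-g (Xseq k)) (z - Xseq k) : ℝ) ≤ inner ℝ (-g (Xseq k)) (Zseq k - Xseq k))
    (hG : ∀ k, G k = inner ℝ (-g (Xseq k)) (Zseq k - Xseq k))
    (hupd : ∀ k : ℕ, Xseq (k + 1) = Xseq k + (min (G k / M) 1) • (Zseq k - Xseq k)) :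
    ∀ k, Xseq k ∈ X := by
  intro k
  induction k with
  | zero => exact hX0
  | succ k ih =>
    have hG0 : 0 ≤ G k := hG k ▸ inner_sub_nonneg_of_forall_le ih (hZopt k)
    rw [hupd k]
    exact hX.add_smul_sub_mem ih (hZmem k)
      ⟨le_min (div_nonneg hG0 hM.le) zero_le_one, min_le_right _ _⟩

end FrankWolfe

/-- Refined two-case bound on the minimum Frank–Wolfe gap from the proof of
Theorem 4.4: writing `G̃_K = min_{0 ≤ k ≤ K} G_k`, if `h₀ > M/2` then
`G̃_K ≤ 2 h₀ / √(K+1)`, and if `h₀ ≤ M/2` then `G̃_K ≤ √(2 h₀ M / (K+1))`. -/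
theorem frankWolfe_nonconvex_gap_two_cases
    {E : Type*} [NormedAddCommGroup E] [InnerProductSpace ℝ E]
    (X : Set E) (hX : Convex ℝ X)
    (φ : E → ℝ) (g : E → E) (M : ℝ) (hM : 0 < M)
    (hcurv : ∀ x ∈ X, ∀ z ∈ X, ∀ s ∈ Icc (0 : ℝ) 1,
      φ (x + s • (z - x)) ≤ φ x + s * inner ℝ (g x) (z - x) + s ^ 2 / 2 * M)
    (Xseq Zseq : ℕ → E) (hX0 : Xseq 0 ∈ X)
    (hZmem : ∀ k, Zseq k ∈ X)
    (hZopt : ∀ k, ∀ z ∈ X,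
      (inner ℝ (-g (Xseq k)) (z - Xseq k) : ℝ) ≤ inner ℝ (-g (Xseq k)) (Zseq k - Xseq k))
    (G : ℕ → ℝ) (hG : ∀ k, G k = inner ℝ (-g (Xseq k)) (Zseq k - Xseq k))
    (hupd : ∀ k : ℕ, Xseq (k + 1) = Xseq k + (min (G k / M) 1) • (Zseq k - Xseq k))
    (hbdd : BddBelow (φ '' X)) (h₀ : ℝ) (hh₀ : h₀ = φ (Xseq 0) - sInf (φ '' X)) :
    ∀ K : ℕ,
      (h₀ > M / 2 →
        (Finset.range (K + 1)).inf'
            (Finset.nonempty_range_iff.mpr (Nat.succ_ne_zero K)) G ≤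
          2 * h₀ / Real.sqrt ((K : ℝ) + 1)) ∧
      (h₀ ≤ M / 2 →
        (Finset.range (K + 1)).inf'
            (Finset.nonempty_range_iff.mpr (Nat.succ_ne_zero K)) G ≤
          Real.sqrt (2 * h₀ * M / ((K : ℝ) + 1))) := by
  intro K
  have hmem := frankWolfe_iterate_mem_s4 hX hM hX0 hZmem hZopt hG hupd
  have hG0 k : 0 ≤ G k := hG k ▸ inner_sub_nonneg_of_forall_le (hmem k) (hZopt k)
  set Gt := (Finset.range (K + 1)).inf'
    (Finset.nonempty_range_iff.mpr (Nat.succ_ne_zero K)) G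
  have hGt0 : 0 ≤ Gt := (Finset.le_inf'_iff _ _).2 fun k _ => hG0 k
  have hdecrease := sum_range_le_sub_of_succ_le_sub (a := fun k => φ (Xseq k))
    (fun k => hupd k ▸ frankWolfe_step_le hM hcurv (hmem k) (hZmem k) (hG k) (hG0 k)) (K + 1)
  have hlow := Finset.card_nsmul_le_sum (Finset.range (K + 1))
    (fun k => G k * min (G k) M / (2 * M)) (Gt * min Gt M / (2 * M)) fun k hk =>
      div_le_div_of_nonneg_right (mul_min_le_mul_min hGt0 hM.le (Finset.inf'_le _ hk))
        (by positivity)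
  have hinf : sInf (φ '' X) ≤ φ (Xseq (K + 1)) := csInf_le hbdd (mem_image_of_mem φ (hmem _))
  rw [Finset.card_range, nsmul_eq_mul, Nat.cast_succ] at hlow
  have hkey : ((K : ℝ) + 1) * (Gt * min Gt M) ≤ 2 * h₀ * M := by
    have : ((K : ℝ) + 1) * (Gt * min Gt M) / (2 * M) ≤ h₀ := by
      rw [mul_div_assoc]
      linarith
    rw [div_le_iff₀ (by positivity)] at this
    linarith
  have hN : (1 : ℝ) ≤ K + 1 := le_add_of_nonneg_left K.cast_nonneg
  exact ⟨fun hh => le_two_mul_div_sqrt_of_mul_mul_min_le hM hN hh hkey,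
    fun hh => le_sqrt_of_mul_mul_min_le hM hN hh hkey⟩
end

section
/- (Sequence-level core of Theorem 4.4.) Let M > 0, K ≥ 0, and let φ_0, φ_1, …, φ_{K+1} be real numbers and G_0, …, G_K be nonnegative real numbers such that for every 0 ≤ k ≤ K: φ_{k+1} ≤ φ_k − G_k²/(2M) whenever G_k ≤ M, and φ_{k+1} ≤ φ_k − (G_k − M/2) whenever G_k > M. Let h₀ ≥ 0 satisfy h₀ ≥ φ_0 − φ_{K+1}. Then min_{0 ≤ k ≤ K} G_k ≤ max{2h₀, M}/√(K+1). -/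
/-!
Each step decreases `φ` by at least `d(G_k)`, where `d = guaranteedDecrease M` is the
Huber-type function `d(x) = x² / (2M)` for `x ≤ M` and `d(x) = x - M/2` beyond; it is monotone
on `[0, ∞)`. With `g = min_k G_k > 0`, telescoping gives `(K + 1) d(g) ≤ h₀`. If `g ≤ M` this
reads `(K + 1) g² ≤ 2 M h₀ ≤ max {2h₀, M}²`; if `g > M` then `d(g) ≥ g/2`, so
`(K + 1) g ≤ 2 h₀`, which is even stronger since `√(K + 1) ≤ K + 1`.
-/

open Finset

theorem nsmul_le_sub_of_forall_le_sub {α : Type*} [AddCommGroup α] [PartialOrder α]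
    [IsOrderedAddMonoid α] {φ : ℕ → α} {c : α} {n : ℕ}
    (h : ∀ k < n, c ≤ φ k - φ (k + 1)) : n • c ≤ φ 0 - φ n := by
  calc n • c = ∑ _k ∈ range n, c := by rw [sum_const, card_range]
    _ ≤ ∑ k ∈ range n, (φ k - φ (k + 1)) := sum_le_sum fun k hk => h k (mem_range.1 hk)
    _ = φ 0 - φ n := sum_range_sub' φ n

theorem le_div_sqrt_of_mul_sq_le {g c N : ℝ} (hc : 0 ≤ c) (hN : 0 < N)
    (h : N * g ^ 2 ≤ c ^ 2) : g ≤ c / √N := by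
  have hsq : g ^ 2 ≤ (c / √N) ^ 2 := by
    rw [div_pow, Real.sq_sqrt hN.le, le_div_iff₀ hN, mul_comm]
    exact h
  exact (le_abs_self g).trans (abs_le_of_sq_le_sq hsq (by positivity))

theorem le_div_sqrt_of_mul_le {g c N : ℝ} (hc : 0 ≤ c) (hN : 1 ≤ N) (h : N * g ≤ c) :
    g ≤ c / √N := by
  have hN₀ : 0 < N := one_pos.trans_le hN
  have hsqrt : √N ≤ N := (Real.sqrt_le_left hN₀.le).2 (by nlinarith)
  calc g ≤ c / N := (le_div_iff₀ hN₀).2 (by linarith)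
    _ ≤ c / √N := div_le_div_of_nonneg_left hc (Real.sqrt_pos.2 hN₀) hsqrt

noncomputable def guaranteedDecrease (M x : ℝ) : ℝ :=
  if x ≤ M then x ^ 2 / (2 * M) else x - M / 2

theorem guaranteedDecrease_mono {M x y : ℝ} (hM : 0 < M) (hx : 0 ≤ x) (hxy : x ≤ y) :
    guaranteedDecrease M x ≤ guaranteedDecrease M y := by
  unfold guaranteedDecrease
  split_ifs with hxM hyM hyM
  · gcongr
  · rw [div_le_iff₀ (by positivity)]
    nlinarith
  · exact absurd (hxy.trans hyM) hxM
  · linarith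

theorem le_max_div_sqrt_of_mul_guaranteedDecrease_le {M g h N : ℝ} (hM : 0 < M) (hN : 1 ≤ N)
    (hdec : N * guaranteedDecrease M g ≤ h) : g ≤ max (2 * h) M / √N := by
  have h₂h : 2 * h ≤ max (2 * h) M := le_max_left _ _
  have hM_le : M ≤ max (2 * h) M := le_max_right _ _
  unfold guaranteedDecrease at hdec
  split_ifs at hdec with hgM
  · refine le_div_sqrt_of_mul_sq_le (hM.le.trans hM_le) (one_pos.trans_le hN) ?_
    rw [← mul_div_assoc, div_le_iff₀ (by positivity)] at hdec
    nlinarith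
  · refine le_div_sqrt_of_mul_le (hM.le.trans hM_le) hN ?_
    nlinarith

theorem frankWolfe_gap_sequence_bound_general
    (M : ℝ) (hM : 0 < M) (K : ℕ) (φ G : ℕ → ℝ)
    (hdec₁ : ∀ k ≤ K, G k ≤ M → φ (k + 1) ≤ φ k - G k ^ 2 / (2 * M))
    (hdec₂ : ∀ k ≤ K, M < G k → φ (k + 1) ≤ φ k - (G k - M / 2))
    (h₀ : ℝ) (hh₀ : φ 0 - φ (K + 1) ≤ h₀) :
    (Finset.range (K + 1)).inf'
        (Finset.nonempty_range_iff.mpr (Nat.succ_ne_zero K)) G ≤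
      max (2 * h₀) M / Real.sqrt ((K : ℝ) + 1) := by
  set g := (range (K + 1)).inf' (nonempty_range_iff.mpr (Nat.succ_ne_zero K)) G
  rcases le_or_gt g 0 with hg | hg
  · exact hg.trans (by positivity)
  have hstep : ∀ k < K + 1, guaranteedDecrease M g ≤ φ k - φ (k + 1) := by
    intro k hk
    have hkK : k ≤ K := Nat.lt_succ_iff.1 hk
    refine (guaranteedDecrease_mono hM hg.le (inf'_le G (mem_range.2 hk))).trans ?_
    unfold guaranteedDecrease
    split_ifs with hGM
    · linarith [hdec₁ k hkK hGM]
    · linarith [hdec₂ k hkK (not_le.1 hGM)]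
  have htotal := (nsmul_le_sub_of_forall_le_sub hstep).trans hh₀
  rw [nsmul_eq_mul, Nat.cast_succ] at htotal
  exact le_max_div_sqrt_of_mul_guaranteedDecrease_le hM (by simp) htotal

/-- Sequence-level core of Theorem 4.4: if objective values `φ_k` decrease by
`G_k² / (2M)` when `G_k ≤ M` and by `G_k - M/2` when `G_k > M`, and the total
decrease is at most `h₀`, then `min_{0 ≤ k ≤ K} G_k ≤ max {2 h₀, M} / √(K+1)`. -/
theorem frankWolfe_gap_sequence_bound
    (M : ℝ) (hM : 0 < M) (K : ℕ) (φ G : ℕ → ℝ)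
    (hGnn : ∀ k ≤ K, 0 ≤ G k)
    (hdec₁ : ∀ k ≤ K, G k ≤ M → φ (k + 1) ≤ φ k - G k ^ 2 / (2 * M))
    (hdec₂ : ∀ k ≤ K, M < G k → φ (k + 1) ≤ φ k - (G k - M / 2))
    (h₀ : ℝ) (hh₀nn : 0 ≤ h₀) (hh₀ : φ 0 - φ (K + 1) ≤ h₀) :
    (Finset.range (K + 1)).inf'
        (Finset.nonempty_range_iff.mpr (Nat.succ_ne_zero K)) G ≤
      max (2 * h₀) M / Real.sqrt ((K : ℝ) + 1) :=
  frankWolfe_gap_sequence_bound_general M hM K φ G hdec₁ hdec₂ h₀ hh₀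
end

section
/- (Theorem 4.6, closed form of the Euclidean linear oracle.) Let L, U be n×n complex Hermitian positive definite matrices with U − L positive definite, and let S be an n×n complex Hermitian matrix. Let P be an invertible n×n complex matrix with U − L = P*P, and let P S P* = Q Λ Q* where Q is unitary and Λ is a real diagonal matrix of eigenvalues λ_1, …, λ_n. Define D₊ to be the diagonal matrix with (D₊)_{ii} = 1 if λ_i ≥ 0 and (D₊)_{ii} = 0 if λ_i < 0, and set Z* := L + P* Q D₊ Q* P. Then Z* is Hermitian with L ⪯ Z* ⪯ U, and for every Hermitian matrix Z with L ⪯ Z ⪯ U, Re(trace(S·Z)) ≤ Re(trace(S·Z*)). -/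
/-!
Put `C = Q*P`, so that `U - L = C*C` and `C S C* = Λ`. The substitution `Z = L + C* M C` maps
the feasible set `L ⪯ Z ⪯ U` onto `0 ⪯ M ⪯ 1` and the objective `Re tr(S Z)` onto
`Re tr(S L) + Σ λᵢ Re Mᵢᵢ`. The diagonal of such an `M` lies in `[0, 1]`, so the sum is at most
`Σ_{λᵢ ≥ 0} λᵢ`, and `M = D₊ = nonnegIndicator λ` attains it.
-/

open Matrix ComplexOrder

namespace Matrix

variable {n 𝕜 : Type*} [RCLike 𝕜]

section nonnegIndicator

variable [DecidableEq n]

noncomputable def nonnegIndicator (lam : n → ℝ) : Matrix n n 𝕜 :=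
  diagonal fun i => if 0 ≤ lam i then 1 else 0

lemma posSemidef_nonnegIndicator (lam : n → ℝ) :
    (nonnegIndicator lam : Matrix n n 𝕜).PosSemidef :=
  posSemidef_diagonal_iff.mpr fun i => by split_ifs <;> simp

lemma posSemidef_one_sub_nonnegIndicator (lam : n → ℝ) :
    (1 - nonnegIndicator lam : Matrix n n 𝕜).PosSemidef := by
  rw [nonnegIndicator, ← diagonal_one, diagonal_sub]
  exact posSemidef_diagonal_iff.mpr fun i => by split_ifs <;> simp

end nonnegIndicator

lemma PosSemidef.re_diag_nonneg {M : Matrix n n 𝕜} (hM : M.PosSemidef) (i : n) :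
    0 ≤ RCLike.re (M i i) :=
  (RCLike.nonneg_iff.mp hM.diag_nonneg).1

lemma re_diag_le_one_of_posSemidef_one_sub [DecidableEq n] {M : Matrix n n 𝕜}
    (hM : (1 - M).PosSemidef) (i : n) : RCLike.re (M i i) ≤ 1 := by
  simpa using hM.re_diag_nonneg i

variable [Fintype n]

lemma trace_mul_conjTranspose_mul_mul (S C M : Matrix n n 𝕜) :
    trace (S * (Cᴴ * M * C)) = trace (C * S * Cᴴ * M) := by
  simpa only [mul_assoc] using trace_mul_comm (S * Cᴴ * M) C

variable [DecidableEq n]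

lemma re_trace_diagonal_mul_le_nonnegIndicator {M : Matrix n n 𝕜} (hM : M.PosSemidef)
    (hM₁ : (1 - M).PosSemidef) (lam : n → ℝ) :
    RCLike.re (trace (diagonal (fun i => (lam i : 𝕜)) * M)) ≤
      RCLike.re (trace (diagonal (fun i => (lam i : 𝕜)) * nonnegIndicator lam)) := by
  simp only [trace, diag, diagonal_mul, nonnegIndicator, diagonal_apply_eq, map_sum,
    RCLike.re_ofReal_mul]
  refine Finset.sum_le_sum fun i _ => ?_
  by_cases hi : 0 ≤ lam i
  · rw [if_pos hi, RCLike.one_re, mul_one]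
    exact mul_le_of_le_one_right hi (re_diag_le_one_of_posSemidef_one_sub hM₁ i)
  · rw [if_neg hi, map_zero, mul_zero]
    exact mul_nonpos_of_nonpos_of_nonneg (le_of_not_ge hi) (hM.re_diag_nonneg i)

lemma exists_posSemidef_conjTranspose_mul_mul_eq {C X : Matrix n n 𝕜} (hC : IsUnit C)
    (hX : X.PosSemidef) (hCX : (Cᴴ * C - X).PosSemidef) :
    ∃ M : Matrix n n 𝕜, M.PosSemidef ∧ (1 - M).PosSemidef ∧ X = Cᴴ * M * C := by
  have hCinv : C⁻¹ * C = 1 := nonsing_inv_mul C ((isUnit_iff_isUnit_det C).mp hC)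
  set M := (C⁻¹)ᴴ * X * C⁻¹
  have hXM : X = Cᴴ * M * C :=
    calc X = (C⁻¹ * C)ᴴ * X * (C⁻¹ * C) := by simp [hCinv]
      _ = Cᴴ * M * C := by simp only [M, conjTranspose_mul, mul_assoc]
  refine ⟨M, ?_, ?_, hXM⟩
  · exact hX.conjTranspose_mul_mul_same _
  · rw [← hC.posSemidef_star_left_conjugate_iff]
    rwa [star_eq_conjTranspose, mul_sub, sub_mul, mul_one, ← hXM]

lemma posSemidef_sub_add_conjTranspose_mul_nonnegIndicator_mul {L U C : Matrix n n 𝕜}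
    (hUL : U - L = Cᴴ * C) (lam : n → ℝ) :
    (U - (L + Cᴴ * nonnegIndicator lam * C)).PosSemidef := by
  rw [← sub_sub, hUL]
  simpa only [mul_sub, sub_mul, mul_one] using
    (posSemidef_one_sub_nonnegIndicator lam).conjTranspose_mul_mul_same C

theorem re_trace_mul_le_of_posSemidef_sub {L U S C Z : Matrix n n 𝕜} {lam : n → ℝ}
    (hC : IsUnit C) (hUL : U - L = Cᴴ * C)
    (hCS : C * S * Cᴴ = diagonal fun i => (lam i : 𝕜))
    (hZL : (Z - L).PosSemidef) (hUZ : (U - Z).PosSemidef) :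
    RCLike.re (trace (S * Z)) ≤ RCLike.re (trace (S * (L + Cᴴ * nonnegIndicator lam * C))) := by
  obtain ⟨M, hM, hM₁, hZM⟩ := exists_posSemidef_conjTranspose_mul_mul_eq hC hZL
    (by rwa [← hUL, sub_sub_sub_cancel_right])
  rw [← add_sub_cancel L Z, hZM]
  simp only [mul_add, trace_add, map_add, trace_mul_conjTranspose_mul_mul, hCS]
  exact add_le_add_right (re_trace_diagonal_mul_le_nonnegIndicator hM hM₁ lam) _

end Matrix

theorem euclidean_linear_oracle_general {n : ℕ}
    (L U S P Q : Matrix (Fin n) (Fin n) ℂ)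
    (hL : L.PosDef)
    (hPinv : IsUnit P) (hPfac : U - L = Pᴴ * P)
    (hQ : Q ∈ Matrix.unitaryGroup (Fin n) ℂ)
    (lam : Fin n → ℝ)
    (hdiag : P * S * Pᴴ =
      Q * Matrix.diagonal (fun i => (lam i : ℂ)) * Qᴴ) :
    (L + Pᴴ * Q * Matrix.diagonal (fun i => if 0 ≤ lam i then (1 : ℂ) else 0)
        * Qᴴ * P).IsHermitian ∧
    ((L + Pᴴ * Q * Matrix.diagonal (fun i => if 0 ≤ lam i then (1 : ℂ) else 0)
        * Qᴴ * P) - L).PosSemidef ∧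
    (U - (L + Pᴴ * Q * Matrix.diagonal (fun i => if 0 ≤ lam i then (1 : ℂ) else 0)
        * Qᴴ * P)).PosSemidef ∧
    ∀ Z : Matrix (Fin n) (Fin n) ℂ, Z.IsHermitian →
      (Z - L).PosSemidef → (U - Z).PosSemidef →
      ((S * Z).trace).re ≤
        ((S * (L + Pᴴ * Q * Matrix.diagonal
          (fun i => if 0 ≤ lam i then (1 : ℂ) else 0) * Qᴴ * P)).trace).re := by
  have hQQ : Q * Qᴴ = 1 := mem_unitaryGroup_iff.mp hQ
  have hQQ' : Qᴴ * Q = 1 := mem_unitaryGroup_iff'.mp hQ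
  set C := Qᴴ * P
  have hC : IsUnit C := IsUnit.mul ⟨⟨Qᴴ, Q, hQQ', hQQ⟩, rfl⟩ hPinv
  have hUL : U - L = Cᴴ * C := by
    simp only [C, hPfac, conjTranspose_mul, conjTranspose_conjTranspose, mul_assoc,
      ← mul_assoc Q, hQQ, one_mul]
  have hCS : C * S * Cᴴ = diagonal fun i => (lam i : ℂ) := by
    calc C * S * Cᴴ = Qᴴ * (P * S * Pᴴ) * Q := by
          simp only [C, conjTranspose_mul, conjTranspose_conjTranspose, mul_assoc]
      _ = _ := by rw [hdiag]; simp only [← mul_assoc, hQQ', one_mul, mul_assoc _ Qᴴ Q, mul_one]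
  have hZstar : Pᴴ * Q * diagonal (fun i => if 0 ≤ lam i then (1 : ℂ) else 0) * Qᴴ * P =
      Cᴴ * nonnegIndicator lam * C := by
    simp only [C, nonnegIndicator, conjTranspose_mul, conjTranspose_conjTranspose, mul_assoc]
  have hD := posSemidef_nonnegIndicator (𝕜 := ℂ) lam
  rw [hZstar]
  refine ⟨hL.isHermitian.add (hD.conjTranspose_mul_mul_same C).isHermitian,
    by simpa only [add_sub_cancel_left] using hD.conjTranspose_mul_mul_same C,
    posSemidef_sub_add_conjTranspose_mul_nonnegIndicator_mul hUL lam,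
    fun Z _ hZL hUZ => re_trace_mul_le_of_posSemidef_sub hC hUL hCS hZL hUZ⟩

/-- Theorem 4.6: closed form of the Euclidean linear oracle. Given Hermitian
positive definite `L, U` with `U - L` positive definite, Hermitian `S`,
an invertible `P` with `U - L = P*P`, and a spectral decomposition
`P S P* = Q Λ Q*` with `Q` unitary and `Λ = diag(λ)` real, the matrix
`Z* = L + P* Q D₊ Q* P` (with `D₊ = diag(1 if λᵢ ≥ 0 else 0)`) is Hermitian,
satisfies `L ⪯ Z* ⪯ U`, and maximizes `Re(tr(S Z))` over Hermitian `L ⪯ Z ⪯ U`. -/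
theorem euclidean_linear_oracle {n : ℕ}
    (L U S P Q : Matrix (Fin n) (Fin n) ℂ)
    (hL : L.PosDef) (hU : U.PosDef) (hUL : (U - L).PosDef)
    (hS : S.IsHermitian)
    (hPinv : IsUnit P) (hPfac : U - L = Pᴴ * P)
    (hQ : Q ∈ Matrix.unitaryGroup (Fin n) ℂ)
    (lam : Fin n → ℝ)
    (hdiag : P * S * Pᴴ =
      Q * Matrix.diagonal (fun i => (lam i : ℂ)) * Qᴴ) :
    (L + Pᴴ * Q * Matrix.diagonal (fun i => if 0 ≤ lam i then (1 : ℂ) else 0)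
        * Qᴴ * P).IsHermitian ∧
    ((L + Pᴴ * Q * Matrix.diagonal (fun i => if 0 ≤ lam i then (1 : ℂ) else 0)
        * Qᴴ * P) - L).PosSemidef ∧
    (U - (L + Pᴴ * Q * Matrix.diagonal (fun i => if 0 ≤ lam i then (1 : ℂ) else 0)
        * Qᴴ * P)).PosSemidef ∧
    ∀ Z : Matrix (Fin n) (Fin n) ℂ, Z.IsHermitian →
      (Z - L).PosSemidef → (U - Z).PosSemidef →
      ((S * Z).trace).re ≤
        ((S * (L + Pᴴ * Q * Matrix.diagonal
          (fun i => if 0 ≤ lam i then (1 : ℂ) else 0) * Qᴴ * P)).trace).re :=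
  euclidean_linear_oracle_general L U S P Q hL hPinv hPfac hQ lam hdiag
end

section
/- (Intermediate claim in the proof of Theorem 4.6: attainment.) Let A be an n×n complex Hermitian matrix with spectral decomposition A = Q Λ Q*, where Q is unitary and Λ is the real diagonal matrix of eigenvalues λ_1, …, λ_n. Let D₊ be the diagonal matrix with (D₊)_{ii} = 1 if λ_i ≥ 0 and 0 otherwise, and set Z₀ := Q D₊ Q*. Then Z₀ is Hermitian with 0 ⪯ Z₀ ⪯ I, and Re(trace(A·Z₀)) = Σ_{i=1}^n max(λ_i, 0). Consequently Z₀ maximizes Re(trace(A·Z)) over all Hermitian Z with 0 ⪯ Z ⪯ I. -/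
/-!
With `W = Q* Z Q`, the trace `Re tr(A Z)` equals `Σᵢ λᵢ Re Wᵢᵢ`. Unitary conjugation preserves
`0 ⪯ Z ⪯ I`, so `0 ≤ Re Wᵢᵢ ≤ 1` and each term is at most `max(λᵢ, 0)`. For `Z = Z₀` one has
`W = D₊`, and every term attains this bound.
-/

open Matrix ComplexOrder

theorem mul_le_max_zero_of_nonneg_of_le_one {R : Type*} [Ring R] [LinearOrder R]
    [IsOrderedRing R] {l w : R} (hw₀ : 0 ≤ w) (hw₁ : w ≤ 1) : l * w ≤ max l 0 :=
  calc l * w ≤ max l 0 * w := mul_le_mul_of_nonneg_right (le_max_left l 0) hw₀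
    _ ≤ max l 0 := mul_le_of_le_one_right (le_max_right l 0) hw₁

namespace Matrix

variable {ι R : Type*}

theorem one_sub_mul_mul_star_of_mem_unitaryGroup [Fintype ι] [DecidableEq ι] [CommRing R]
    [StarRing R] {U : Matrix ι ι R} (hU : U ∈ unitaryGroup ι R) (X : Matrix ι ι R) :
    1 - U * X * star U = U * (1 - X) * star U := by
  rw [mul_sub, sub_mul, mul_one, mem_unitaryGroup_iff.mp hU]

theorem PosSemidef.one_sub_mul_mul_star_of_mem_unitaryGroup [Fintype ι] [DecidableEq ι]
    [CommRing R] [PartialOrder R] [StarRing R] {U X : Matrix ι ι R}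
    (hU : U ∈ unitaryGroup ι R) (hX : (1 - X).PosSemidef) :
    (1 - U * X * star U).PosSemidef := by
  rw [Matrix.one_sub_mul_mul_star_of_mem_unitaryGroup hU]
  exact hX.mul_mul_conjTranspose_same U

theorem PosSemidef.diag_le_one_of_one_sub [DecidableEq ι] [Ring R] [PartialOrder R] [StarRing R]
    [StarOrderedRing R] {X : Matrix ι ι R} (hX : (1 - X).PosSemidef) (i : ι) : X i i ≤ 1 :=
  sub_nonneg.mp (by simpa using hX.diag_nonneg (i := i))

theorem posSemidef_one_sub_diagonal_iff [DecidableEq ι] [Ring R] [PartialOrder R] [StarRing R]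
    [StarOrderedRing R] {d : ι → R} :
    (1 - diagonal d).PosSemidef ↔ ∀ i, d i ≤ 1 := by
  rw [← diagonal_one, diagonal_sub, posSemidef_diagonal_iff]
  simp only [sub_nonneg]

theorem trace_mul_diagonal_mul_mul [Fintype ι] [DecidableEq ι] [CommSemiring R]
    (U V Z : Matrix ι ι R) (d : ι → R) :
    (U * diagonal d * V * Z).trace = ∑ i, d i * (V * Z * U) i i := by
  rw [Matrix.mul_assoc, trace_mul_comm, ← Matrix.mul_assoc]
  simp [trace, mul_diagonal, mul_comm]

section Complex

variable [Fintype ι] [DecidableEq ι]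

theorem re_trace_conj_diagonal_ofReal_mul (Q Z : Matrix ι ι ℂ) (lam : ι → ℝ) :
    (Q * diagonal (fun i => (lam i : ℂ)) * Qᴴ * Z).trace.re
      = ∑ i, lam i * ((Qᴴ * Z * Q) i i).re := by
  simp only [trace_mul_diagonal_mul_mul, Complex.re_sum, Complex.re_ofReal_mul]

theorem re_trace_conj_diagonal_ofReal_mul_le_sum_max {Q Z : Matrix ι ι ℂ}
    (hQ : Q ∈ unitaryGroup ι ℂ) (hZ : Z.PosSemidef) (hZ₁ : (1 - Z).PosSemidef) (lam : ι → ℝ) :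
    (Q * diagonal (fun i => (lam i : ℂ)) * Qᴴ * Z).trace.re ≤ ∑ i, max (lam i) 0 := by
  have hW : (Qᴴ * Z * Q).PosSemidef := hZ.conjTranspose_mul_mul_same Q
  have hW₁ : (1 - Qᴴ * Z * Q).PosSemidef := by
    simpa [star_eq_conjTranspose] using
      hZ₁.one_sub_mul_mul_star_of_mem_unitaryGroup (Unitary.star_mem hQ)
  rw [re_trace_conj_diagonal_ofReal_mul]
  refine Finset.sum_le_sum fun i _ => mul_le_max_zero_of_nonneg_of_le_one ?_ ?_
  · exact Complex.re_le_re hW.diag_nonneg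
  · exact Complex.re_le_re (hW₁.diag_le_one_of_one_sub i)

theorem re_trace_conj_diagonal_ofReal_mul_conj_indicator_nonneg {Q : Matrix ι ι ℂ}
    (hQ : Q ∈ unitaryGroup ι ℂ) (lam : ι → ℝ) :
    (Q * diagonal (fun i => (lam i : ℂ)) * Qᴴ *
      (Q * diagonal (fun i => if 0 ≤ lam i then (1 : ℂ) else 0) * Qᴴ)).trace.re
      = ∑ i, max (lam i) 0 := by
  have hQ' : Qᴴ * Q = 1 := mem_unitaryGroup_iff'.mp hQ
  rw [re_trace_conj_diagonal_ofReal_mul, ← Matrix.mul_assoc, ← Matrix.mul_assoc, hQ',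
    Matrix.one_mul, Matrix.mul_assoc, hQ', Matrix.mul_one]
  refine Finset.sum_congr rfl fun i _ => ?_
  rw [diagonal_apply_eq]
  split_ifs with h <;> simp [h, le_of_not_ge]

end Complex

end Matrix

theorem trace_mul_attained_at_projection_general {n : ℕ}
    (A Q : Matrix (Fin n) (Fin n) ℂ)
    (hQ : Q ∈ Matrix.unitaryGroup (Fin n) ℂ)
    (lam : Fin n → ℝ)
    (hdecomp : A = Q * Matrix.diagonal (fun i => (lam i : ℂ)) * Qᴴ) :
    (Q * Matrix.diagonal (fun i => if 0 ≤ lam i then (1 : ℂ) else 0) * Qᴴ).IsHermitian ∧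
    (Q * Matrix.diagonal (fun i => if 0 ≤ lam i then (1 : ℂ) else 0) * Qᴴ).PosSemidef ∧
    ((1 : Matrix (Fin n) (Fin n) ℂ) -
      Q * Matrix.diagonal (fun i => if 0 ≤ lam i then (1 : ℂ) else 0) * Qᴴ).PosSemidef ∧
    ((A * (Q * Matrix.diagonal (fun i => if 0 ≤ lam i then (1 : ℂ) else 0) * Qᴴ)).trace).re
      = ∑ i, max (lam i) 0 ∧
    ∀ Z : Matrix (Fin n) (Fin n) ℂ, Z.IsHermitian →
      Z.PosSemidef → ((1 : Matrix (Fin n) (Fin n) ℂ) - Z).PosSemidef →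
      ((A * Z).trace).re ≤
        ((A * (Q * Matrix.diagonal (fun i => if 0 ≤ lam i then (1 : ℂ) else 0) * Qᴴ)).trace).re := by
  subst hdecomp
  have hD : (diagonal fun i => if 0 ≤ lam i then (1 : ℂ) else 0).PosSemidef :=
    posSemidef_diagonal_iff.mpr fun i => by split_ifs <;> simp
  have hD₁ : (1 - diagonal fun i => if 0 ≤ lam i then (1 : ℂ) else 0).PosSemidef :=
    posSemidef_one_sub_diagonal_iff.mpr fun i => by split_ifs <;> simp
  have hZ₀ := hD.mul_mul_conjTranspose_same Q
  have hvalue := re_trace_conj_diagonal_ofReal_mul_conj_indicator_nonneg hQ lam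
  refine ⟨hZ₀.isHermitian, hZ₀, hD₁.one_sub_mul_mul_star_of_mem_unitaryGroup hQ, hvalue,
    fun Z _ hZ hZ₁ => ?_⟩
  rw [hvalue]
  exact re_trace_conj_diagonal_ofReal_mul_le_sum_max hQ hZ hZ₁ lam

/-- Intermediate claim in the proof of Theorem 4.6 (attainment): if
`A = Q Λ Q*` is a spectral decomposition of the Hermitian matrix `A` with `Q`
unitary and `Λ = diag(λ)` real, then `Z₀ = Q D₊ Q*` (with
`D₊ = diag(1 if λᵢ ≥ 0 else 0)`) is Hermitian with `0 ⪯ Z₀ ⪯ I`, attains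
`Re(tr(A Z₀)) = Σᵢ max(λᵢ, 0)`, and hence maximizes `Re(tr(A Z))` over all
Hermitian `Z` with `0 ⪯ Z ⪯ I`. -/
theorem trace_mul_attained_at_projection {n : ℕ}
    (A Q : Matrix (Fin n) (Fin n) ℂ) (hA : A.IsHermitian)
    (hQ : Q ∈ Matrix.unitaryGroup (Fin n) ℂ)
    (lam : Fin n → ℝ)
    (hdecomp : A = Q * Matrix.diagonal (fun i => (lam i : ℂ)) * Qᴴ) :
    (Q * Matrix.diagonal (fun i => if 0 ≤ lam i then (1 : ℂ) else 0) * Qᴴ).IsHermitian ∧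
    (Q * Matrix.diagonal (fun i => if 0 ≤ lam i then (1 : ℂ) else 0) * Qᴴ).PosSemidef ∧
    ((1 : Matrix (Fin n) (Fin n) ℂ) -
      Q * Matrix.diagonal (fun i => if 0 ≤ lam i then (1 : ℂ) else 0) * Qᴴ).PosSemidef ∧
    ((A * (Q * Matrix.diagonal (fun i => if 0 ≤ lam i then (1 : ℂ) else 0) * Qᴴ)).trace).re
      = ∑ i, max (lam i) 0 ∧
    ∀ Z : Matrix (Fin n) (Fin n) ℂ, Z.IsHermitian →
      Z.PosSemidef → ((1 : Matrix (Fin n) (Fin n) ℂ) - Z).PosSemidef →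
      ((A * Z).trace).re ≤
        ((A * (Q * Matrix.diagonal (fun i => if 0 ≤ lam i then (1 : ℂ) else 0) * Qᴴ)).trace).re :=
  trace_mul_attained_at_projection_general A Q hQ lam hdecomp
end
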